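/- Let A ∈ ℝ^{m×n} be nonzero, let P ⊆ ℝ^m and Q ⊆ ℝ^n be polyhedral cones, and let (u,v) be a critical pair of SV(A,P,Q). Let F_u and F_v be the faces of P and Q of least dimension containing u and v respectively, and let r be the multiplicity of ‖A‖ as a singular value of A. If dim(F_u) + dim(F_v) > m + n − r and ⟨u,Av⟩ ≠ ‖A‖ and ⟨u,Av⟩ ≠ −‖A‖, then (u,v) is a saddle point of SV(A,P,Q), i.e. it is neither a local minimizer nor a local maximizer of (u,v) ↦ ⟨u,Av⟩ on the feasible set {(u,v) : u ∈ P, v ∈ Q, ‖u‖ = ‖v‖ = 1}. -/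

import Mathlib

open Matrix

/-- Euclidean norm of a vector in `ℝ^n`. -/
noncomputable def vnorm {n : ℕ} (v : Fin n → ℝ) : ℝ := Real.sqrt (v ⬝ᵥ v)

/-- Spectral norm of a real matrix: the largest value of `‖Av‖` over the unit ball. -/
noncomputable def specNorm {m n : ℕ} (A : Matrix (Fin m) (Fin n) ℝ) : ℝ :=
  sSup {r : ℝ | ∃ v : Fin n → ℝ, vnorm v ≤ 1 ∧ r = vnorm (A.mulVec v)}

/-- The polyhedral cone generated by the columns of `G`. -/
def coneOf {m p : ℕ} (G : Matrix (Fin m) (Fin p) ℝ) : Set (Fin m → ℝ) :=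
  {u | ∃ x : Fin p → ℝ, (∀ i, 0 ≤ x i) ∧ u = G.mulVec x}

/-- `F` is a face of the cone `P`. -/
def IsFace {d : ℕ} (P F : Set (Fin d → ℝ)) : Prop :=
  F ⊆ P ∧ Convex ℝ F ∧ (∀ c : ℝ, 0 ≤ c → ∀ x ∈ F, c • x ∈ F) ∧
    ∀ v₁ v₂, v₁ ∈ P → v₂ ∈ P → v₁ + v₂ ∈ F → v₁ ∈ F ∧ v₂ ∈ F

/-- The dimension of a face: the dimension of its linear span. -/
noncomputable def faceDim {d : ℕ} (F : Set (Fin d → ℝ)) : ℕ :=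
  Module.finrank ℝ ↥(Submodule.span ℝ F)

/-
By first-order optimality, `A v - σ u` and `Aᵀ u - σ v` (with `σ = ⟨u, A v⟩`) vanish on the
spans of `F_u` and `F_v`: the least-dimensional face through `u` spans exactly the directions `w`
along which one can move from `u` inside `P` both ways, i.e. `u ± t w ∈ P` for small `t`.
The dimension hypothesis yields a unit `z ∈ span F_v` with `AᵀA z = ‖A‖² z` and
`w = A z / ‖A‖ ∈ span F_u`. Along the renormalized curve `(u + t w, v + t z)` the objective is
`(σ + σ (⟨u,w⟩ + ⟨v,z⟩) t + ‖A‖ t²) / (‖u + t w‖ ‖v + t z‖)`, which exceeds `σ` for `t > 0`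
because `|σ| < ‖A‖`; the same argument for `(-A, -z)` produces nearby points of smaller value.
-/

open Filter Topology Module

section EuclideanNorm

variable {n : ℕ}

lemma vnorm_eq_norm (x : Fin n → ℝ) : vnorm x = ‖WithLp.toLp 2 x‖ := by
  simp [vnorm, EuclideanSpace.norm_eq, dotProduct, sq]

lemma vnorm_sq (x : Fin n → ℝ) : vnorm x ^ 2 = x ⬝ᵥ x :=
  Real.sq_sqrt (dotProduct_self_star_nonneg x)

lemma vnorm_smul (c : ℝ) (x : Fin n → ℝ) : vnorm (c • x) = |c| * vnorm x := by
  rw [vnorm_eq_norm, vnorm_eq_norm, WithLp.toLp_smul, norm_smul, Real.norm_eq_abs]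

lemma vnorm_inv_smul_self {x : Fin n → ℝ} (hx : 0 < vnorm x) : vnorm ((vnorm x)⁻¹ • x) = 1 := by
  rw [vnorm_smul, abs_inv, abs_of_pos hx, inv_mul_cancel₀ hx.ne']

lemma continuous_vnorm : Continuous (vnorm : (Fin n → ℝ) → ℝ) := by
  unfold vnorm; fun_prop

lemma abs_dotProduct_le_vnorm_mul_vnorm (x y : Fin n → ℝ) : |x ⬝ᵥ y| ≤ vnorm x * vnorm y := by
  have := abs_real_inner_le_norm (WithLp.toLp 2 x) (WithLp.toLp 2 y)
  rwa [EuclideanSpace.inner_toLp_toLp, star_trivial, dotProduct_comm, ← vnorm_eq_norm,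
    ← vnorm_eq_norm] at this

lemma abs_dotProduct_le_one {x y : Fin n → ℝ} (hx : vnorm x = 1) (hy : vnorm y = 1) :
    |x ⬝ᵥ y| ≤ 1 := by
  simpa [hx, hy] using abs_dotProduct_le_vnorm_mul_vnorm x y

lemma vnorm_add_smul_sq {x y : Fin n → ℝ} (hx : vnorm x = 1) (hy : vnorm y = 1) (t : ℝ) :
    vnorm (x + t • y) ^ 2 = 1 + 2 * (x ⬝ᵥ y) * t + t ^ 2 := by
  have hxx := vnorm_sq x
  have hyy := vnorm_sq y
  rw [hx] at hxx
  rw [hy] at hyy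
  rw [vnorm_sq]
  simp only [dotProduct_add, add_dotProduct, dotProduct_smul, smul_dotProduct, smul_eq_mul,
    dotProduct_comm y x]
  linear_combination -hxx - t ^ 2 * hyy

lemma eventually_vnorm_normalize_sub_lt {u : Fin n → ℝ} (hu : vnorm u = 1) (w : Fin n → ℝ)
    {ε : ℝ} (hε : 0 < ε) :
    ∀ᶠ t in 𝓝 (0 : ℝ), 0 < vnorm (u + t • w) ∧
      vnorm ((vnorm (u + t • w))⁻¹ • (u + t • w) - u) < ε := by
  have hcont : Continuous fun t : ℝ => vnorm (u + t • w) := by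
    have := continuous_vnorm (n := n); fun_prop
  have hpos : ∀ᶠ t in 𝓝 (0 : ℝ), 0 < vnorm (u + t • w) :=
    continuousAt_const.eventually_lt hcont.continuousAt (by simp [hu])
  have hnear : ContinuousAt
      (fun t : ℝ => vnorm ((vnorm (u + t • w))⁻¹ • (u + t • w) - u)) 0 :=
    continuous_vnorm.continuousAt.comp
      (((hcont.continuousAt.inv₀ (by simp [hu])).smul (by fun_prop)).sub continuousAt_const)
  refine hpos.and (hnear.eventually_lt continuousAt_const ?_)
  simp only [zero_smul, add_zero, hu, inv_one, one_smul, sub_self]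
  simpa [vnorm] using hε

lemma exists_vnorm_mulVec_le {m : ℕ} (A : Matrix (Fin m) (Fin n) ℝ) :
    ∃ C, ∀ x, vnorm (A *ᵥ x) ≤ C * vnorm x := by
  refine ⟨‖LinearMap.toContinuousLinearMap (Matrix.toEuclideanLin A)‖, fun x => ?_⟩
  simpa [vnorm_eq_norm] using
    (LinearMap.toContinuousLinearMap (Matrix.toEuclideanLin A)).le_opNorm (WithLp.toLp 2 x)

lemma abs_dotProduct_mulVec_le_specNorm {m : ℕ} (A : Matrix (Fin m) (Fin n) ℝ)
    {u : Fin m → ℝ} {v : Fin n → ℝ} (hu : vnorm u = 1) (hv : vnorm v = 1) :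
    |u ⬝ᵥ A *ᵥ v| ≤ specNorm A := by
  obtain ⟨C, hC⟩ := exists_vnorm_mulVec_le A
  have hbdd : BddAbove {r : ℝ | ∃ v : Fin n → ℝ, vnorm v ≤ 1 ∧ r = vnorm (A *ᵥ v)} := by
    refine ⟨max C 0, ?_⟩
    rintro r ⟨x, hx, rfl⟩
    calc vnorm (A *ᵥ x) ≤ C * vnorm x := hC x
      _ ≤ max C 0 * vnorm x := by gcongr; exacts [Real.sqrt_nonneg _, le_max_left _ _]
      _ ≤ max C 0 := mul_le_of_le_one_right (le_max_right _ _) hx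
  calc |u ⬝ᵥ A *ᵥ v| ≤ vnorm u * vnorm (A *ᵥ v) := abs_dotProduct_le_vnorm_mul_vnorm _ _
    _ = vnorm (A *ᵥ v) := by rw [hu, one_mul]
    _ ≤ specNorm A := le_csSup hbdd ⟨v, hv.le, rfl⟩

end EuclideanNorm

structure IsConvexCone {E : Type*} [AddCommGroup E] [Module ℝ E] (P : Set E) : Prop where
  add_mem : ∀ ⦃x⦄, x ∈ P → ∀ ⦃y⦄, y ∈ P → x + y ∈ P
  smul_mem : ∀ ⦃c : ℝ⦄, 0 ≤ c → ∀ ⦃x⦄, x ∈ P → c • x ∈ P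

lemma isConvexCone_coneOf {m p : ℕ} (G : Matrix (Fin m) (Fin p) ℝ) : IsConvexCone (coneOf G) where
  add_mem := by
    rintro _ ⟨a, ha, rfl⟩ _ ⟨b, hb, rfl⟩
    exact ⟨a + b, fun i => add_nonneg (ha i) (hb i), (Matrix.mulVec_add G a b).symm⟩
  smul_mem := by
    rintro c hc _ ⟨a, ha, rfl⟩
    exact ⟨c • a, fun i => mul_nonneg hc (ha i), (Matrix.mulVec_smul G c a).symm⟩

namespace IsConvexCone

section Directions

variable {E : Type*} [AddCommGroup E] [Module ℝ E] {P : Set E} {u : E}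

lemma convex (hP : IsConvexCone P) : Convex ℝ P :=
  fun _ hx _ hy _ _ ha hb _ => hP.add_mem (hP.smul_mem ha hx) (hP.smul_mem hb hy)

def twoSidedDirections (hP : IsConvexCone P) (hu : u ∈ P) : Submodule ℝ E where
  carrier := {w | ∀ᶠ t in 𝓝 (0 : ℝ), u + t • w ∈ P}
  add_mem' := by
    intro w₁ w₂ h₁ h₂
    have h2 : Tendsto (fun t : ℝ => 2 * t) (𝓝 0) (𝓝 0) := by
      simpa using (continuous_const_mul (2 : ℝ)).tendsto 0
    filter_upwards [h2.eventually h₁, h2.eventually h₂] with t ht₁ ht₂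
    have : u + t • (w₁ + w₂) =
        (1 / 2 : ℝ) • (u + (2 * t) • w₁) + (1 / 2 : ℝ) • (u + (2 * t) • w₂) := by
      module
    rw [this]
    exact hP.add_mem (hP.smul_mem (by norm_num) ht₁) (hP.smul_mem (by norm_num) ht₂)
  zero_mem' := by simp [hu]
  smul_mem' := by
    intro c w h
    have hc : Tendsto (fun t : ℝ => t * c) (𝓝 0) (𝓝 0) := by
      simpa using (continuous_mul_const c).tendsto 0
    filter_upwards [hc.eventually h] with t ht
    rwa [smul_smul]

variable {hP : IsConvexCone P} {hu : u ∈ P}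

lemma self_mem_twoSidedDirections : u ∈ hP.twoSidedDirections hu := by
  filter_upwards [Ioi_mem_nhds (show (-1 : ℝ) < 0 by norm_num)] with t ht
  have : u + t • u = (1 + t) • u := by module
  rw [this]
  exact hP.smul_mem (by linarith [Set.mem_Ioi.mp ht]) hu

lemma exists_pos_add_smul_mem {w : E} (hw : w ∈ hP.twoSidedDirections hu) :
    ∃ t : ℝ, 0 < t ∧ u + t • w ∈ P :=
  let ⟨t, hwt, ht⟩ := ((hw.filter_mono nhdsWithin_le_nhds).and self_mem_nhdsWithin).exists
    (f := 𝓝[>] (0 : ℝ))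
  ⟨t, ht, hwt⟩

lemma mem_twoSidedDirections_of_add_mem {v₁ v₂ : E} (h₁ : v₁ ∈ P) (h₂ : v₂ ∈ P)
    (h : v₁ + v₂ ∈ hP.twoSidedDirections hu) : v₁ ∈ hP.twoSidedDirections hu := by
  filter_upwards [h] with t ht
  rcases le_or_gt 0 t with ht₀ | ht₀
  · exact hP.add_mem hu (hP.smul_mem ht₀ h₁)
  · have : u + t • v₁ = (u + t • (v₁ + v₂)) + (-t) • v₂ := by module
    rw [this]
    exact hP.add_mem ht (hP.smul_mem (by linarith) h₂)

lemma apply_eq_zero_of_mem_twoSidedDirections {g : E →ₗ[ℝ] ℝ} (hg : ∀ x ∈ P, 0 ≤ g x)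
    (hgu : g u = 0) {w : E} (hw : w ∈ hP.twoSidedDirections hu) : g w = 0 := by
  have key : ∀ w ∈ hP.twoSidedDirections hu, 0 ≤ g w := by
    intro w hw
    obtain ⟨t, ht, hmem⟩ := exists_pos_add_smul_mem hw
    have := hg _ hmem
    rw [map_add, map_smul, hgu, zero_add, smul_eq_mul] at this
    exact nonneg_of_mul_nonneg_right this ht
  have := key (-w) (neg_mem hw)
  rw [map_neg, neg_nonneg] at this
  exact le_antisymm this (key w hw)

end Directions

variable {d : ℕ} {P : Set (Fin d → ℝ)} {hP : IsConvexCone P} {u : Fin d → ℝ} {hu : u ∈ P}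

/-- By `inter_twoSidedDirections_subset`, this is the least face of `P` containing `u`. -/
lemma isFace_inter_twoSidedDirections : IsFace P (P ∩ hP.twoSidedDirections hu) := by
  refine ⟨Set.inter_subset_left, hP.convex.inter (Submodule.convex _),
    fun c hc x hx => ⟨hP.smul_mem hc hx.1, Submodule.smul_mem _ c hx.2⟩,
    fun v₁ v₂ h₁ h₂ h => ⟨⟨h₁, mem_twoSidedDirections_of_add_mem h₁ h₂ h.2⟩, ⟨h₂, ?_⟩⟩⟩
  rw [add_comm] at h
  exact mem_twoSidedDirections_of_add_mem h₂ h₁ h.2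

lemma inter_twoSidedDirections_subset {F : Set (Fin d → ℝ)} (hF : IsFace P F) (huF : u ∈ F) :
    P ∩ hP.twoSidedDirections hu ⊆ F := by
  rintro x ⟨hxP, hx⟩
  obtain ⟨t, ht, hmem⟩ := exists_pos_add_smul_mem (neg_mem hx)
  have htx : t • x ∈ F := (hF.2.2.2 _ _ hmem (hP.smul_mem ht.le hxP) (by simpa using huF)).2
  simpa [smul_smul, ht.ne'] using hF.2.2.1 t⁻¹ (inv_nonneg.mpr ht.le) _ htx

lemma span_le_twoSidedDirections {F : Set (Fin d → ℝ)} (hF : IsFace P F) (huF : u ∈ F)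
    (hFmin : ∀ F', IsFace P F' → u ∈ F' → faceDim F ≤ faceDim F') :
    Submodule.span ℝ F ≤ hP.twoSidedDirections hu := by
  have hspan : Submodule.span ℝ (P ∩ hP.twoSidedDirections hu) = Submodule.span ℝ F :=
    Submodule.eq_of_le_of_finrank_le
      (Submodule.span_mono (inter_twoSidedDirections_subset hF huF))
      (hFmin _ isFace_inter_twoSidedDirections ⟨hu, self_mem_twoSidedDirections⟩)
  rw [← hspan, Submodule.span_le]
  exact Set.inter_subset_right

lemma dotProduct_eq_of_mem_twoSidedDirections {a w : Fin d → ℝ} {σ : ℝ}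
    (hcrit : ∀ x ∈ P, 0 ≤ (a - σ • u) ⬝ᵥ x) (hcompl : u ⬝ᵥ (a - σ • u) = 0)
    (hw : w ∈ hP.twoSidedDirections hu) : a ⬝ᵥ w = σ * (u ⬝ᵥ w) := by
  have := apply_eq_zero_of_mem_twoSidedDirections (g := dotProductBilin ℝ ℝ (a - σ • u))
    hcrit (by rwa [dotProductBilin_apply_apply, dotProduct_comm]) hw
  rwa [dotProductBilin_apply_apply, sub_dotProduct, smul_dotProduct, smul_eq_mul,
    sub_eq_zero] at this

end IsConvexCone

section Dimension

variable {K E F : Type*} [Field K] [AddCommGroup E] [Module K E] [FiniteDimensional K E]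
  [AddCommGroup F] [Module K F] [FiniteDimensional K F]

lemma Submodule.finrank_add_finrank_le_finrank_inf_add (S T : Submodule K E) :
    finrank K S + finrank K T ≤ finrank K ↥(S ⊓ T) + finrank K E := by
  have := Submodule.finrank_sup_add_finrank_inf_eq S T
  have := (S ⊔ T).finrank_le
  omega

lemma Submodule.finrank_add_le_finrank_comap_add (f : E →ₗ[K] F) (U : Submodule K F) :
    finrank K U + finrank K E ≤ finrank K (U.comap f) + finrank K F := by
  have hker : LinearMap.ker (U.mkQ ∘ₗ f) = U.comap f := by
    rw [LinearMap.ker_comp, Submodule.ker_mkQ]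
  have := LinearMap.finrank_range_add_finrank_ker (U.mkQ ∘ₗ f)
  have := (LinearMap.range (U.mkQ ∘ₗ f)).finrank_le
  have := Submodule.finrank_quotient_add_finrank U
  rw [hker] at *
  omega

lemma exists_ne_zero_mem_inf_map_mem (f : E →ₗ[K] F) (S T : Submodule K E) (U : Submodule K F)
    (h : finrank K E + finrank K F < finrank K S + finrank K T + finrank K U) :
    ∃ z ∈ S ⊓ T, z ≠ 0 ∧ f z ∈ U := by
  have h₁ := Submodule.finrank_add_finrank_le_finrank_inf_add S T
  have h₂ := Submodule.finrank_add_finrank_le_finrank_inf_add (S ⊓ T) (U.comap f)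
  have h₃ := Submodule.finrank_add_le_finrank_comap_add f U
  have hne : S ⊓ T ⊓ U.comap f ≠ ⊥ := by
    intro hbot
    rw [hbot, finrank_bot] at h₂
    omega
  obtain ⟨z, hz, hz₀⟩ := Submodule.exists_mem_ne_zero_of_ne_bot hne
  exact ⟨z, hz.1, hz₀, hz.2⟩

end Dimension

section SingularVectors

variable {m n : ℕ} (A : Matrix (Fin m) (Fin n) ℝ)

lemma dotProduct_mulVec_self_of_mem_ker {s : ℝ} {z : Fin n → ℝ}
    (hz : z ∈ LinearMap.ker (Aᵀ * A - s • (1 : Matrix (Fin n) (Fin n) ℝ)).mulVecLin) :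
    A *ᵥ z ⬝ᵥ A *ᵥ z = s * (z ⬝ᵥ z) := by
  rw [LinearMap.mem_ker, Matrix.mulVecLin_apply, Matrix.sub_mulVec, sub_eq_zero,
    ← Matrix.mulVec_mulVec, Matrix.smul_mulVec, Matrix.one_mulVec] at hz
  rw [Matrix.dotProduct_mulVec, ← Matrix.mulVec_transpose, hz, smul_dotProduct, smul_eq_mul]

lemma exists_unit_singular_pair {s : ℝ} (hs : 0 < s)
    (U : Submodule ℝ (Fin m → ℝ)) (V : Submodule ℝ (Fin n → ℝ))
    (h : m + n < finrank ℝ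
      ↥(LinearMap.ker (Aᵀ * A - s ^ 2 • (1 : Matrix (Fin n) (Fin n) ℝ)).mulVecLin) +
        finrank ℝ U + finrank ℝ V) :
    ∃ w ∈ U, ∃ z ∈ V, vnorm w = 1 ∧ vnorm z = 1 ∧ w ⬝ᵥ A *ᵥ z = s := by
  obtain ⟨z₀, ⟨hker, hV⟩, hz₀, hU⟩ := exists_ne_zero_mem_inf_map_mem A.mulVecLin
    (LinearMap.ker (Aᵀ * A - s ^ 2 • (1 : Matrix (Fin n) (Fin n) ℝ)).mulVecLin) V U
    (by rw [finrank_fin_fun, finrank_fin_fun]; omega)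
  have hpos : 0 < vnorm z₀ := by
    rw [vnorm_eq_norm]
    exact norm_pos_iff.mpr (by simpa using hz₀)
  set z := (vnorm z₀)⁻¹ • z₀
  have hz : vnorm z = 1 := vnorm_inv_smul_self hpos
  have hAz : vnorm (A *ᵥ z) = s := by
    rw [vnorm, dotProduct_mulVec_self_of_mem_ker A (Submodule.smul_mem _ _ hker), ← vnorm_sq, hz,
      one_pow, mul_one, Real.sqrt_sq hs.le]
  refine ⟨s⁻¹ • A *ᵥ z, U.smul_mem _ ?_, z, V.smul_mem _ hV, ?_, hz, ?_⟩
  · rw [Matrix.mulVec_smul]; exact U.smul_mem _ hU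
  · rw [vnorm_smul, hAz, abs_inv, abs_of_pos hs, inv_mul_cancel₀ hs.ne']
  · rw [smul_dotProduct, ← vnorm_sq, hAz, smul_eq_mul]; field_simp

end SingularVectors

lemma mul_mul_lt_of_sq_eq {σ s α β a b t : ℝ} (hs : |σ| < s) (hα : |α| ≤ 1) (hβ : |β| ≤ 1)
    (ha : 0 ≤ a) (hb : 0 ≤ b) (ha2 : a ^ 2 = 1 + 2 * α * t + t ^ 2)
    (hb2 : b ^ 2 = 1 + 2 * β * t + t ^ 2) (ht : 0 < t) :
    σ * (a * b) < σ + σ * (α + β) * t + s * t ^ 2 := by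
  have ht2 : 0 < t ^ 2 := by positivity
  rcases le_or_gt 0 σ with hσ | hσ
  · have hab : a * b ≤ (a ^ 2 + b ^ 2) / 2 := by nlinarith [sq_nonneg (a - b)]
    have hσs : σ < s := (le_abs_self σ).trans_lt hs
    calc σ * (a * b) ≤ σ * ((a ^ 2 + b ^ 2) / 2) := mul_le_mul_of_nonneg_left hab hσ
      _ = σ + σ * (α + β) * t + σ * t ^ 2 := by rw [ha2, hb2]; ring
      _ < σ + σ * (α + β) * t + s * t ^ 2 := by gcongr
  · have hα2 : α ^ 2 ≤ 1 := sq_le_one_iff_abs_le_one α |>.mpr hα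
    have hβ2 : β ^ 2 ≤ 1 := sq_le_one_iff_abs_le_one β |>.mpr hβ
    -- `a² = (1 + α t)² + (1 - α²) t²`, and likewise for `b`
    have hαa : |1 + α * t| ≤ a := abs_le_of_sq_le_sq (by nlinarith) ha
    have hβb : |1 + β * t| ≤ b := abs_le_of_sq_le_sq (by nlinarith) hb
    have hαβ : σ * α * β < s := by
      calc σ * α * β ≤ |σ * α * β| := le_abs_self _
        _ = |σ| * (|α| * |β|) := by rw [abs_mul, abs_mul, mul_assoc]
        _ ≤ |σ| * 1 := by gcongr; exact mul_le_one₀ hα (abs_nonneg _) hβ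
        _ < s := by rwa [mul_one]
    calc σ * (a * b) ≤ σ * ((1 + α * t) * (1 + β * t)) := by
          refine mul_le_mul_of_nonpos_left ?_ hσ.le
          calc (1 + α * t) * (1 + β * t) ≤ |1 + α * t| * |1 + β * t| := by
                rw [← abs_mul]; exact le_abs_self _
            _ ≤ a * b := mul_le_mul hαa hβb (abs_nonneg _) ha
      _ = σ + σ * (α + β) * t + σ * α * β * t ^ 2 := by ring
      _ < σ + σ * (α + β) * t + s * t ^ 2 := by gcongr

def IsLocalMaxSV {m n : ℕ} (A : Matrix (Fin m) (Fin n) ℝ) (P : Set (Fin m → ℝ))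
    (Q : Set (Fin n → ℝ)) (u : Fin m → ℝ) (v : Fin n → ℝ) : Prop :=
  ∃ ε > (0 : ℝ), ∀ u' ∈ P, ∀ v' ∈ Q, vnorm u' = 1 → vnorm v' = 1 →
    vnorm (u' - u) < ε → vnorm (v' - v) < ε → u' ⬝ᵥ A *ᵥ v' ≤ u ⬝ᵥ A *ᵥ v

/-- Moving along `(u + t • w, v + t • z)` and renormalizing strictly increases the objective. -/
lemma not_isLocalMaxSV {m n : ℕ} {A : Matrix (Fin m) (Fin n) ℝ} {P : Set (Fin m → ℝ)}
    {Q : Set (Fin n → ℝ)} (hP : IsConvexCone P) (hQ : IsConvexCone Q)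
    {u w : Fin m → ℝ} {v z : Fin n → ℝ} {s : ℝ}
    (hu : vnorm u = 1) (hv : vnorm v = 1) (hw : vnorm w = 1) (hz : vnorm z = 1)
    (hfeas : ∀ᶠ t in 𝓝[>] (0 : ℝ), u + t • w ∈ P ∧ v + t • z ∈ Q)
    (hwv : w ⬝ᵥ A *ᵥ v = (u ⬝ᵥ A *ᵥ v) * (u ⬝ᵥ w))
    (huz : u ⬝ᵥ A *ᵥ z = (u ⬝ᵥ A *ᵥ v) * (v ⬝ᵥ z))
    (hwz : w ⬝ᵥ A *ᵥ z = s) (hs : |u ⬝ᵥ A *ᵥ v| < s) :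
    ¬ IsLocalMaxSV A P Q u v := by
  rintro ⟨ε, hε, hmax⟩
  obtain ⟨t, ⟨hPt, hQt⟩, ⟨ha, hu'⟩, ⟨hb, hv'⟩, ht⟩ := (hfeas.and <|
    ((eventually_vnorm_normalize_sub_lt hu w hε).filter_mono nhdsWithin_le_nhds).and <|
    ((eventually_vnorm_normalize_sub_lt hv z hε).filter_mono nhdsWithin_le_nhds).and
      self_mem_nhdsWithin).exists
  have hlt := mul_mul_lt_of_sq_eq hs (abs_dotProduct_le_one hu hw) (abs_dotProduct_le_one hv hz)
    ha.le hb.le (vnorm_add_smul_sq hu hw t) (vnorm_add_smul_sq hv hz t) ht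
  have hval : (u + t • w) ⬝ᵥ A *ᵥ (v + t • z) =
      u ⬝ᵥ A *ᵥ v + u ⬝ᵥ A *ᵥ v * (u ⬝ᵥ w + v ⬝ᵥ z) * t + s * t ^ 2 := by
    simp only [Matrix.mulVec_add, Matrix.mulVec_smul, dotProduct_add, add_dotProduct,
      dotProduct_smul, smul_dotProduct, smul_eq_mul, hwv, huz, hwz]
    ring
  refine (hmax _ (hP.smul_mem (inv_nonneg.2 ha.le) hPt) _ (hQ.smul_mem (inv_nonneg.2 hb.le) hQt)
    (vnorm_inv_smul_self ha) (vnorm_inv_smul_self hb) hu' hv').not_gt ?_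
  rw [Matrix.mulVec_smul, dotProduct_smul, smul_dotProduct, hval, smul_eq_mul, smul_eq_mul,
    ← mul_assoc, ← mul_inv, inv_mul_eq_div, lt_div_iff₀ (mul_pos hb ha), mul_comm (vnorm _)]
  exact hlt

def IsLocalMinSV {m n : ℕ} (A : Matrix (Fin m) (Fin n) ℝ) (P : Set (Fin m → ℝ))
    (Q : Set (Fin n → ℝ)) (u : Fin m → ℝ) (v : Fin n → ℝ) : Prop :=
  ∃ ε > (0 : ℝ), ∀ u' ∈ P, ∀ v' ∈ Q, vnorm u' = 1 → vnorm v' = 1 →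
    vnorm (u' - u) < ε → vnorm (v' - v) < ε → u ⬝ᵥ A *ᵥ v ≤ u' ⬝ᵥ A *ᵥ v'

/-- The case `(-A, -z)` of `not_isLocalMaxSV`. -/
lemma not_isLocalMinSV {m n : ℕ} {A : Matrix (Fin m) (Fin n) ℝ} {P : Set (Fin m → ℝ)}
    {Q : Set (Fin n → ℝ)} (hP : IsConvexCone P) (hQ : IsConvexCone Q)
    {u w : Fin m → ℝ} {v z : Fin n → ℝ} {s : ℝ}
    (hu : vnorm u = 1) (hv : vnorm v = 1) (hw : vnorm w = 1) (hz : vnorm z = 1)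
    (hfeas : ∀ᶠ t in 𝓝[>] (0 : ℝ), u + t • w ∈ P ∧ v + t • -z ∈ Q)
    (hwv : w ⬝ᵥ A *ᵥ v = (u ⬝ᵥ A *ᵥ v) * (u ⬝ᵥ w))
    (huz : u ⬝ᵥ A *ᵥ z = (u ⬝ᵥ A *ᵥ v) * (v ⬝ᵥ z))
    (hwz : w ⬝ᵥ A *ᵥ z = s) (hs : |u ⬝ᵥ A *ᵥ v| < s) :
    ¬ IsLocalMinSV A P Q u v := by
  rintro ⟨ε, hε, hmin⟩
  refine not_isLocalMaxSV (A := -A) hP hQ hu hv hw (by simpa [vnorm] using hz) hfeas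
    (by simp [Matrix.neg_mulVec, hwv]) (by simp [Matrix.neg_mulVec, Matrix.mulVec_neg, huz])
    (by simpa [Matrix.neg_mulVec, Matrix.mulVec_neg] using hwz)
    (by simpa [Matrix.neg_mulVec] using hs) ⟨ε, hε, fun u' hu' v' hv' h₁ h₂ h₃ h₄ => ?_⟩
  simpa [Matrix.neg_mulVec] using hmin u' hu' v' hv' h₁ h₂ h₃ h₄

theorem stmt8_general {m n : ℕ} (A : Matrix (Fin m) (Fin n) ℝ)
    (P : Set (Fin m → ℝ)) (Q : Set (Fin n → ℝ))
    (hP : ∃ (p : ℕ) (G : Matrix (Fin m) (Fin p) ℝ), P = coneOf G)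
    (hQ : ∃ (q : ℕ) (H : Matrix (Fin n) (Fin q) ℝ), Q = coneOf H)
    (u : Fin m → ℝ) (v : Fin n → ℝ)
    (hu : u ∈ P) (hv : v ∈ Q) (hnu : vnorm u = 1) (hnv : vnorm v = 1)
    (hcrit1 : ∀ w ∈ P, 0 ≤ (A.mulVec v - (u ⬝ᵥ A.mulVec v) • u) ⬝ᵥ w)
    (hcrit2 : ∀ w ∈ Q, 0 ≤ (Aᵀ.mulVec u - (u ⬝ᵥ A.mulVec v) • v) ⬝ᵥ w)
    (hcrit3 : u ⬝ᵥ (A.mulVec v - (u ⬝ᵥ A.mulVec v) • u) = 0)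
    (hcrit4 : v ⬝ᵥ (Aᵀ.mulVec u - (u ⬝ᵥ A.mulVec v) • v) = 0)
    (Fu : Set (Fin m → ℝ)) (Fv : Set (Fin n → ℝ))
    (hFu : IsFace P Fu) (huFu : u ∈ Fu)
    (hFumin : ∀ F, IsFace P F → u ∈ F → faceDim Fu ≤ faceDim F)
    (hFv : IsFace Q Fv) (hvFv : v ∈ Fv)
    (hFvmin : ∀ F, IsFace Q F → v ∈ F → faceDim Fv ≤ faceDim F)
    (r : ℕ)
    (hr : r = Module.finrank ℝ
      ↥(LinearMap.ker (Aᵀ * A - specNorm A ^ 2 • (1 : Matrix (Fin n) (Fin n) ℝ)).mulVecLin))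
    (hdim : m + n - r < faceDim Fu + faceDim Fv)
    (hne1 : u ⬝ᵥ A.mulVec v ≠ specNorm A) (hne2 : u ⬝ᵥ A.mulVec v ≠ -specNorm A) :
    (¬ ∃ ε > (0:ℝ), ∀ u' ∈ P, ∀ v' ∈ Q, vnorm u' = 1 → vnorm v' = 1 →
        vnorm (u' - u) < ε → vnorm (v' - v) < ε → u ⬝ᵥ A.mulVec v ≤ u' ⬝ᵥ A.mulVec v') ∧
    (¬ ∃ ε > (0:ℝ), ∀ u' ∈ P, ∀ v' ∈ Q, vnorm u' = 1 → vnorm v' = 1 →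
        vnorm (u' - u) < ε → vnorm (v' - v) < ε → u' ⬝ᵥ A.mulVec v' ≤ u ⬝ᵥ A.mulVec v) := by
  obtain ⟨p, G, rfl⟩ := hP
  obtain ⟨q, H, rfl⟩ := hQ
  have hP := isConvexCone_coneOf G
  have hQ := isConvexCone_coneOf H
  have hσ : |u ⬝ᵥ A *ᵥ v| < specNorm A := by
    refine (abs_dotProduct_mulVec_le_specNorm A hnu hnv).lt_of_ne fun h => ?_
    rcases abs_choice (u ⬝ᵥ A *ᵥ v) with h' | h'
    · exact hne1 (h' ▸ h)
    · exact hne2 (by linarith)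
  have hrn : r ≤ n := hr ▸ (Submodule.finrank_le _).trans_eq (finrank_fin_fun ℝ)
  obtain ⟨w, hwU, z, hzV, hw, hz, hwz⟩ := exists_unit_singular_pair A
    ((abs_nonneg _).trans_lt hσ) (Submodule.span ℝ Fu) (Submodule.span ℝ Fv)
    (by rw [← hr]; unfold faceDim at hdim; omega)
  have hwL := hP.span_le_twoSidedDirections (hu := hu) hFu huFu hFumin hwU
  have hzL := hQ.span_le_twoSidedDirections (hu := hv) hFv hvFv hFvmin hzV
  have hwv : w ⬝ᵥ A *ᵥ v = u ⬝ᵥ A *ᵥ v * (u ⬝ᵥ w) := by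
    rw [dotProduct_comm]
    exact IsConvexCone.dotProduct_eq_of_mem_twoSidedDirections hcrit1 hcrit3 hwL
  have huz : u ⬝ᵥ A *ᵥ z = u ⬝ᵥ A *ᵥ v * (v ⬝ᵥ z) := by
    rw [Matrix.dotProduct_mulVec, ← Matrix.mulVec_transpose]
    exact IsConvexCone.dotProduct_eq_of_mem_twoSidedDirections hcrit2 hcrit4 hzL
  have hfeas {z' : Fin n → ℝ} (hz' : z' ∈ hQ.twoSidedDirections hv) :
      ∀ᶠ t in 𝓝[>] (0 : ℝ), u + t • w ∈ coneOf G ∧ v + t • z' ∈ coneOf H :=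
    (hwL.and hz').filter_mono nhdsWithin_le_nhds
  exact ⟨not_isLocalMinSV hP hQ hnu hnv hw hz (hfeas (neg_mem hzL)) hwv huz hwz hσ,
    not_isLocalMaxSV hP hQ hnu hnv hw hz (hfeas hzL) hwv huz hwz hσ⟩

/-- If `(u,v)` is a critical pair of `SV(A,P,Q)` for polyhedral cones, the
least-dimensional faces `F_u ∋ u`, `F_v ∋ v` satisfy `dim F_u + dim F_v > m + n − r`
(`r` the multiplicity of `‖A‖` as a singular value of `A`), and `⟨u,Av⟩ ≠ ±‖A‖`, then
`(u,v)` is a saddle point of `SV(A,P,Q)`. -/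
theorem stmt8 {m n : ℕ} (A : Matrix (Fin m) (Fin n) ℝ) (hA : A ≠ 0)
    (P : Set (Fin m → ℝ)) (Q : Set (Fin n → ℝ))
    (hP : ∃ (p : ℕ) (G : Matrix (Fin m) (Fin p) ℝ), P = coneOf G)
    (hQ : ∃ (q : ℕ) (H : Matrix (Fin n) (Fin q) ℝ), Q = coneOf H)
    (u : Fin m → ℝ) (v : Fin n → ℝ)
    (hu : u ∈ P) (hv : v ∈ Q) (hnu : vnorm u = 1) (hnv : vnorm v = 1)
    (hcrit1 : ∀ w ∈ P, 0 ≤ (A.mulVec v - (u ⬝ᵥ A.mulVec v) • u) ⬝ᵥ w)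
    (hcrit2 : ∀ w ∈ Q, 0 ≤ (Aᵀ.mulVec u - (u ⬝ᵥ A.mulVec v) • v) ⬝ᵥ w)
    (hcrit3 : u ⬝ᵥ (A.mulVec v - (u ⬝ᵥ A.mulVec v) • u) = 0)
    (hcrit4 : v ⬝ᵥ (Aᵀ.mulVec u - (u ⬝ᵥ A.mulVec v) • v) = 0)
    (Fu : Set (Fin m → ℝ)) (Fv : Set (Fin n → ℝ))
    (hFu : IsFace P Fu) (huFu : u ∈ Fu)
    (hFumin : ∀ F, IsFace P F → u ∈ F → faceDim Fu ≤ faceDim F)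
    (hFv : IsFace Q Fv) (hvFv : v ∈ Fv)
    (hFvmin : ∀ F, IsFace Q F → v ∈ F → faceDim Fv ≤ faceDim F)
    (r : ℕ)
    (hr : r = Module.finrank ℝ
      ↥(LinearMap.ker (Aᵀ * A - specNorm A ^ 2 • (1 : Matrix (Fin n) (Fin n) ℝ)).mulVecLin))
    (hdim : m + n - r < faceDim Fu + faceDim Fv)
    (hne1 : u ⬝ᵥ A.mulVec v ≠ specNorm A) (hne2 : u ⬝ᵥ A.mulVec v ≠ -specNorm A) :
    (¬ ∃ ε > (0:ℝ), ∀ u' ∈ P, ∀ v' ∈ Q, vnorm u' = 1 → vnorm v' = 1 →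
        vnorm (u' - u) < ε → vnorm (v' - v) < ε → u ⬝ᵥ A.mulVec v ≤ u' ⬝ᵥ A.mulVec v') ∧
    (¬ ∃ ε > (0:ℝ), ∀ u' ∈ P, ∀ v' ∈ Q, vnorm u' = 1 → vnorm v' = 1 →
        vnorm (u' - u) < ε → vnorm (v' - v) < ε → u' ⬝ᵥ A.mulVec v' ≤ u ⬝ᵥ A.mulVec v) :=
  stmt8_general A P Q hP hQ u v hu hv hnu hnv hcrit1 hcrit2 hcrit3 hcrit4 Fu Fv hFu huFu hFumin hFv
    hvFv hFvmin r hr hdim hne1 hne2
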